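/- Let q, x ∈ ℂ with |q| < 1 and x ≠ 0. Then for every integer n ≥ 1, ∑_{j=0}^{n} [n,j]_q · (x;q)_{n−j} · x^j · (1/x;q)_j = 0, where [n,j]_q is the Gaussian binomial coefficient and (a;q)_m the q-Pochhammer symbol. -/

import Mathlib

open Finset

/-- The finite q-Pochhammer symbol `(a;q)_n = ∏_{i=0}^{n-1} (1 - a q^i)`. -/
noncomputable def qPoch (a q : ℂ) (n : ℕ) : ℂ := ∏ i ∈ Finset.range n, (1 - a * q ^ i)

/-- The Gaussian binomial coefficient `[n,j]_q = (q;q)_n/((q;q)_{n-j}(q;q)_j)`. -/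
noncomputable def gaussBinom (q : ℂ) (n j : ℕ) : ℂ :=
  qPoch q q n / (qPoch q q (n - j) * qPoch q q j)

/-! The q-Vandermonde identity `∑ₖ [n,k] (a;q)_{n-k} aᵏ (b;q)ₖ = (ab;q)ₙ` at `b = 1/a` becomes
`(1;q)ₙ`, whose first factor `1 - 1` vanishes. The identity itself follows by induction on `n`
from the q-Pascal rule `[n+1,k+1] = [n,k+1] + q^(n-k) [n,k]`, the two resulting sums combining
termwise through `(1 - a q^(n-k)) + a q^(n-k) (1 - b q^k) = 1 - ab q^n`. -/

@[simp]
lemma qPoch_zero (a q : ℂ) : qPoch a q 0 = 1 := by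
  simp [qPoch]

lemma qPoch_succ (a q : ℂ) (n : ℕ) : qPoch a q (n + 1) = qPoch a q n * (1 - a * q ^ n) := by
  simp [qPoch, prod_range_succ]

lemma qPoch_one_succ (q : ℂ) (n : ℕ) : qPoch 1 q (n + 1) = 0 := by
  simp [qPoch, prod_range_succ']

lemma qPoch_self_ne_zero {q : ℂ} (hq : ‖q‖ < 1) (n : ℕ) : qPoch q q n ≠ 0 := by
  refine prod_ne_zero_iff.mpr fun i _ h => ?_
  have hlt : ‖q * q ^ i‖ < 1 := by
    rw [← pow_succ', norm_pow]
    exact pow_lt_one₀ (norm_nonneg q) hq i.succ_ne_zero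
  rw [← sub_eq_zero.mp h, norm_one] at hlt
  exact hlt.false

section GaussBinom

variable {q : ℂ}

lemma gaussBinom_zero_right {n : ℕ} (h : qPoch q q n ≠ 0) : gaussBinom q n 0 = 1 := by
  simp [gaussBinom, h]

lemma gaussBinom_self {n : ℕ} (h : qPoch q q n ≠ 0) : gaussBinom q n n = 1 := by
  simp [gaussBinom, h]

lemma gaussBinom_succ_succ (hq : ∀ k, qPoch q q k ≠ 0) {n k : ℕ} (hk : k < n) :
    gaussBinom q (n + 1) (k + 1) = gaussBinom q n (k + 1) + q ^ (n - k) * gaussBinom q n k := by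
  obtain ⟨m, rfl⟩ : ∃ m, n = m + k + 1 := ⟨n - k - 1, by omega⟩
  have hfactor (i : ℕ) : 1 - q * q ^ i ≠ 0 := by
    have := hq (i + 1)
    rw [qPoch_succ] at this
    exact right_ne_zero_of_mul this
  simp only [gaussBinom, show m + k + 1 + 1 - (k + 1) = m + 1 by omega,
    show m + k + 1 - (k + 1) = m by omega, show m + k + 1 - k = m + 1 by omega, qPoch_succ]
  field_simp [hq m, hq k, hfactor m, hfactor k]
  ring

lemma sum_gaussBinom_succ_mul (hq : ∀ k, qPoch q q k ≠ 0) (n : ℕ) (f : ℕ → ℂ) :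
    ∑ k ∈ range (n + 2), gaussBinom q (n + 1) k * f k =
      ∑ k ∈ range (n + 1), gaussBinom q n k * f k +
        ∑ k ∈ range (n + 1), q ^ (n - k) * gaussBinom q n k * f (k + 1) := by
  have hpascal : ∑ k ∈ range n, gaussBinom q (n + 1) (k + 1) * f (k + 1) =
      ∑ k ∈ range n, gaussBinom q n (k + 1) * f (k + 1) +
        ∑ k ∈ range n, q ^ (n - k) * gaussBinom q n k * f (k + 1) := by
    rw [← sum_add_distrib]
    refine sum_congr rfl fun k hk => ?_
    rw [gaussBinom_succ_succ hq (mem_range.mp hk)]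
    ring
  rw [sum_range_succ', sum_range_succ, hpascal, sum_range_succ' (fun k => gaussBinom q n k * f k),
    sum_range_succ (fun k => q ^ (n - k) * gaussBinom q n k * f (k + 1)),
    gaussBinom_zero_right (hq _), gaussBinom_zero_right (hq _), gaussBinom_self (hq _),
    gaussBinom_self (hq _), Nat.sub_self, pow_zero]
  ring

theorem q_vandermonde (hq : ∀ k, qPoch q q k ≠ 0) (a b : ℂ) (n : ℕ) :
    ∑ k ∈ range (n + 1), gaussBinom q n k * qPoch a q (n - k) * a ^ k * qPoch b q k =
      qPoch (a * b) q n := by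
  induction n with
  | zero => simp [gaussBinom]
  | succ n ih =>
    have hcombine (k : ℕ) (hk : k ∈ range (n + 1)) :
        gaussBinom q n k * (qPoch a q (n + 1 - k) * a ^ k * qPoch b q k) +
            q ^ (n - k) * gaussBinom q n k *
              (qPoch a q (n + 1 - (k + 1)) * a ^ (k + 1) * qPoch b q (k + 1)) =
          (1 - a * b * q ^ n) * (gaussBinom q n k * qPoch a q (n - k) * a ^ k * qPoch b q k) := by
      have hkn : k ≤ n := Nat.lt_succ_iff.mp (mem_range.mp hk)
      have hpow : q ^ (n - k) * q ^ k = q ^ n := by rw [← pow_add, Nat.sub_add_cancel hkn]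
      rw [Nat.add_sub_add_right, Nat.succ_sub hkn, qPoch_succ, qPoch_succ]
      linear_combination
        (-(gaussBinom q n k * qPoch a q (n - k) * a ^ (k + 1) * qPoch b q k * b)) * hpow
    simp_rw [mul_assoc (gaussBinom q _ _)]
    rw [sum_gaussBinom_succ_mul hq, ← sum_add_distrib, sum_congr rfl hcombine, ← mul_sum]
    rw [ih, qPoch_succ, mul_comm]

end GaussBinom

/-- For `|q| < 1`, `x ≠ 0` and `n ≥ 1`:
`∑_{j=0}^{n} [n,j]_q (x;q)_{n-j} x^j (1/x;q)_j = 0`. -/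
theorem q_vandermonde_vanishes (q x : ℂ) (hq : ‖q‖ < 1) (hx : x ≠ 0)
    (n : ℕ) (hn : 1 ≤ n) :
    ∑ j ∈ Finset.range (n + 1),
      gaussBinom q n j * qPoch x q (n - j) * x ^ j * qPoch x⁻¹ q j = 0 := by
  obtain ⟨m, rfl⟩ : ∃ m, n = m + 1 := ⟨n - 1, by omega⟩
  rw [q_vandermonde (qPoch_self_ne_zero hq) x x⁻¹, mul_inv_cancel₀ hx, qPoch_one_succ]
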